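/- arXiv:1803.00168 — 5 statements merged into one kernel-verified Lean document; each statement's English description precedes it below -/
import Mathlib

section
/- For real numbers α > 2 and s > 0, the Lebesgue integral over the plane satisfies ∫_{ℝ²} (1 − 1/(1 + s‖x‖^{−α})) dx = 2π · (s^{2/α}/α) · B(2/α, (α−2)/α), where ‖·‖ denotes the Euclidean norm on ℝ² and B is the Beta function. (This is the exponent appearing in the Laplace transform of the aggregate inter-cell interference in Lemma 2 of the paper.) -/
/-!
Polar coordinates turn the integral into `2π ∫₀^∞ r (1 + r^α / s)⁻¹ dr`. The substitution
`u = r^α / s` brings this to `(s^{2/α} / α) ∫₀^∞ u^{2/α - 1} (1 + u)⁻¹ du`, and `u = v / (1 - v)`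
identifies the last integral with the Beta integral `∫₀¹ v^{2/α - 1} (1 - v)^{-2/α} dv`.
-/

open MeasureTheory Real Set

noncomputable def realBeta (x y : ℝ) : ℝ := Real.Gamma x * Real.Gamma y / Real.Gamma (x + y)

section RadialIntegrals

variable {E : Type*} [NormedAddCommGroup E] [NormedSpace ℝ E]

theorem integral_fun_norm_euclideanSpace_fin_two (f : ℝ → E) :
    ∫ x : EuclideanSpace ℝ (Fin 2), f ‖x‖ = (2 * π) • ∫ r in Ioi 0, r • f r := by
  have hball : volume.real (Metric.ball (0 : EuclideanSpace ℝ (Fin 2)) 1) = π := by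
    simp [measureReal_def, EuclideanSpace.volume_ball, Real.sq_sqrt Real.pi_pos.le,
      one_add_one_eq_two, pi_nonneg]
  rw [integral_fun_norm_addHaar volume f, finrank_euclideanSpace_fin, hball,
    ← Nat.cast_smul_eq_nsmul ℝ, smul_smul]
  norm_num

theorem integral_Ioi_rpow_smul_comp_div (g : ℝ → E) (a : ℝ) {c : ℝ} (hc : 0 < c) :
    ∫ y in Ioi 0, y ^ (a - 1) • g (y / c) = c ^ a • ∫ y in Ioi 0, y ^ (a - 1) • g y := by
  have h := integral_comp_mul_left_Ioi' (fun y => y ^ (a - 1) • g (y / c)) 0 hc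
  rw [mul_zero] at h
  rw [← h, ← integral_smul, ← integral_smul]
  refine setIntegral_congr_fun measurableSet_Ioi fun y (hy : 0 < y) => ?_
  rw [mul_div_cancel_left₀ y hc.ne', mul_rpow hc.le hy.le, smul_smul, smul_smul, ← mul_assoc,
    rpow_sub_one hc.ne', mul_div_cancel₀ _ hc.ne']

theorem integral_Ioi_rpow_smul_comp_rpow (g : ℝ → E) (q : ℝ) {p : ℝ} (hp : 0 < p) :
    ∫ r in Ioi 0, r ^ (q - 1) • g (r ^ p) = p⁻¹ • ∫ u in Ioi 0, u ^ (q / p - 1) • g u := by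
  rw [← integral_comp_rpow_Ioi_of_pos (g := fun u => u ^ (q / p - 1) • g u) hp, ← integral_smul]
  refine setIntegral_congr_fun measurableSet_Ioi fun r (hr : 0 < r) => ?_
  rw [smul_smul, smul_smul, ← rpow_mul hr.le, inv_mul_cancel_left₀ hp.ne',
    ← rpow_add hr]
  congr 2
  field_simp
  ring

end RadialIntegrals

theorem integral_Ioo_rpow_mul_one_sub_rpow {a b : ℝ} (ha : 0 < a) (hb : 0 < b) :
    ∫ v in Ioo 0 1, v ^ (a - 1) * (1 - v) ^ (b - 1) = realBeta a b := by
  have hB : Complex.betaIntegral a b =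
      ((∫ v in Ioo 0 1, v ^ (a - 1) * (1 - v) ^ (b - 1) : ℝ) : ℂ) := by
    rw [Complex.betaIntegral, intervalIntegral.integral_of_le zero_le_one,
      integral_Ioc_eq_integral_Ioo, ← integral_complex_ofReal]
    refine setIntegral_congr_fun measurableSet_Ioo fun v ⟨hv0, hv1⟩ => ?_
    rw [Complex.ofReal_mul, Complex.ofReal_cpow hv0.le, Complex.ofReal_cpow (sub_nonneg.2 hv1.le)]
    push_cast
    rfl
  have hΓ := Complex.betaIntegral_eq_Gamma_mul_div a b (by simpa) (by simpa)
  rw [hB, ← Complex.ofReal_add, Complex.Gamma_ofReal, Complex.Gamma_ofReal,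
    Complex.Gamma_ofReal] at hΓ
  exact_mod_cast hΓ

theorem integral_Ioi_rpow_div_one_add_rpow {a b : ℝ} (ha : 0 < a) (hb : 0 < b) :
    ∫ u in Ioi 0, u ^ (a - 1) / (1 + u) ^ (a + b) = realBeta a b := by
  have himage : (fun u : ℝ => u / (1 + u)) '' Ioi 0 = Ioo 0 1 := by
    ext v
    constructor
    · rintro ⟨u, hu : 0 < u, rfl⟩
      exact ⟨by positivity, (div_lt_one (by positivity)).2 (by linarith)⟩
    · rintro ⟨hv0, hv1⟩
      refine ⟨v / (1 - v), div_pos hv0 (sub_pos.2 hv1), ?_⟩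
      have : 1 - v ≠ 0 := (sub_pos.2 hv1).ne'
      field_simp
      ring
  have hderiv : ∀ u ∈ Ioi (0 : ℝ),
      HasDerivWithinAt (fun u : ℝ => u / (1 + u)) ((1 + u) ^ 2)⁻¹ (Ioi 0) u := by
    intro u (hu : 0 < u)
    have h := (hasDerivAt_id u).div ((hasDerivAt_const u 1).add (hasDerivAt_id u))
      (by positivity : 1 + u ≠ 0)
    refine h.hasDerivWithinAt.congr_deriv ?_
    simp only [Pi.add_apply, id]
    field_simp
    ring
  have hinj : InjOn (fun u : ℝ => u / (1 + u)) (Ioi 0) := by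
    intro u (hu : 0 < u) v (hv : 0 < v) huv
    rw [div_eq_div_iff (by positivity) (by positivity)] at huv
    linarith
  rw [← integral_Ioo_rpow_mul_one_sub_rpow ha hb, ← himage,
    integral_image_eq_integral_abs_deriv_smul measurableSet_Ioi hderiv hinj]
  refine setIntegral_congr_fun measurableSet_Ioi fun u (hu : 0 < u) => ?_
  have hw : 0 < 1 + u := by linarith
  have hsub : 1 - u / (1 + u) = (1 + u)⁻¹ := by field_simp; ring
  rw [hsub, div_rpow hu.le hw.le, inv_rpow hw.le, abs_of_pos (by positivity), smul_eq_mul,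
    show a + b = (a - 1) + (b - 1) + 2 by ring, rpow_add hw, rpow_add hw, rpow_two]
  field_simp

/-- For `α > 2` and `s > 0`,
`∫_{ℝ²} (1 − 1/(1 + s‖x‖^{−α})) dx = 2π (s^{2/α}/α) B(2/α, (α−2)/α)`. -/
theorem stmt_0 (α s : ℝ) (hα : 2 < α) (hs : 0 < s) :
    ∫ x : EuclideanSpace ℝ (Fin 2), (1 - 1 / (1 + s * ‖x‖ ^ (-α))) =
      2 * π * (s ^ (2 / α) / α) * realBeta (2 / α) ((α - 2) / α) := by
  have hα0 : 0 < α := by linarith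
  have hsum : 2 / α + (α - 2) / α = 1 := by field_simp; ring
  have hradial : ∀ r ∈ Ioi (0 : ℝ),
      r • (1 - 1 / (1 + s * r ^ (-α))) = r ^ ((2 : ℝ) - 1) • (1 + r ^ α / s)⁻¹ := by
    intro r (hr : 0 < r)
    have : 0 < r ^ α := by positivity
    rw [rpow_neg hr.le, smul_eq_mul, smul_eq_mul]
    field_simp
    norm_num
    ring
  calc ∫ x : EuclideanSpace ℝ (Fin 2), (1 - 1 / (1 + s * ‖x‖ ^ (-α)))
      = (2 * π) • ∫ r in Ioi 0, r ^ ((2 : ℝ) - 1) • (1 + r ^ α / s)⁻¹ := by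
        rw [integral_fun_norm_euclideanSpace_fin_two (fun r => 1 - 1 / (1 + s * r ^ (-α))),
          setIntegral_congr_fun measurableSet_Ioi hradial]
    _ = (2 * π) • α⁻¹ • ∫ u in Ioi (0 : ℝ), u ^ (2 / α - 1) • (1 + u / s)⁻¹ := by
        rw [integral_Ioi_rpow_smul_comp_rpow (fun u => (1 + u / s)⁻¹) 2 hα0]
    _ = (2 * π) • α⁻¹ • s ^ (2 / α) • ∫ u in Ioi (0 : ℝ), u ^ (2 / α - 1) • (1 + u)⁻¹ := by
        rw [integral_Ioi_rpow_smul_comp_div (fun u => (1 + u)⁻¹) _ hs]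
    _ = 2 * π * (s ^ (2 / α) / α) * realBeta (2 / α) ((α - 2) / α) := by
        rw [← integral_Ioi_rpow_div_one_add_rpow (by positivity)
          (div_pos (sub_pos.2 hα) hα0), hsum]
        simp only [rpow_one, smul_eq_mul, div_eq_mul_inv]
        ring
end

section
/- Let R_c > 0 and α > 0. Let Y be a random point uniformly distributed on the closed disk of radius R_c centered at the origin in ℝ², and let X be an exponential random variable with rate 1, independent of Y. Then the law of the composite channel gain X/‖Y‖^α is absolutely continuous with respect to Lebesgue measure on (0,∞), with density f(z) = (2/R_c²) ∫_0^{R_c} r^{α+1} e^{−r^α z} dr for z > 0. -/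
open MeasureTheory ProbabilityTheory Real Set

/-!
For `t ≥ 0`, independence and the exponential tail of `X` give
`P(X / ‖Y‖^α ≥ t) = E[exp(-t ‖Y‖^α)]`, which polar coordinates turn into
`(2/R²) ∫₀^R r exp(-t r^α) dr`. Integrating the claimed density over `(t, ∞)` and swapping
the integrals yields the same function, because `∫_t^∞ r^(α+1) exp(-r^α z) dz = r exp(-r^α t)`.
Two finite measures on `ℝ` agreeing on every `[a, ∞)` are equal; for `a < 0` both sides
have total mass `1`.
-/

lemma lintegral_Ioi_rpow_mul_exp_neg {r : ℝ} (hr : 0 < r) (α t : ℝ) :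
    ∫⁻ z in Ioi t, ENNReal.ofReal (r ^ (α + 1) * exp (-(r ^ α * z)))
      = ENNReal.ofReal (r * exp (-(r ^ α * t))) := by
  have hb : 0 < r ^ α := rpow_pos_of_pos hr α
  have hint : IntegrableOn (fun z => r ^ (α + 1) * exp (-(r ^ α * z))) (Ioi t) := by
    have h := (exp_neg_integrableOn_Ioi t hb).const_mul (r ^ (α + 1))
    simp only [neg_mul] at h
    exact h
  rw [← ofReal_integral_eq_lintegral_ofReal hint
    (.of_forall fun z => by positivity), integral_const_mul]
  have hexp : ∫ z in Ioi t, exp (-(r ^ α * z)) = exp (-(r ^ α * t)) / r ^ α := by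
    simpa only [neg_mul, neg_div, div_neg, neg_neg] using integral_exp_mul_Ioi (neg_lt_zero.2 hb) t
  rw [hexp, rpow_add hr, rpow_one]
  field_simp

lemma integral_closedBall_fun_norm_fin_two (f : ℝ → ℝ) (R : ℝ) :
    ∫ y in Metric.closedBall (0 : EuclideanSpace ℝ (Fin 2)) R, f ‖y‖
      = 2 * π * ∫ r in Ioc 0 R, r * f r := by
  have hball : ∀ y : EuclideanSpace ℝ (Fin 2),
      (Metric.closedBall 0 R).indicator (fun y => f ‖y‖) y = (Iic R).indicator f ‖y‖ := by
    intro y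
    simp only [indicator, Metric.mem_closedBall, dist_zero_right, mem_Iic]
  have hvol : volume.real (Metric.ball (0 : EuclideanSpace ℝ (Fin 2)) 1) = π := by
    simp [measureReal_def, pi_nonneg]
  rw [← integral_indicator measurableSet_closedBall, funext hball,
    integral_fun_norm_addHaar volume, finrank_euclideanSpace_fin, hvol]
  simp only [nsmul_eq_mul, smul_eq_mul, Nat.add_one_sub_one, pow_one]
  have hmul : ∀ y, y * (Iic R).indicator f y = (Iic R).indicator (fun r => r * f r) y :=
    fun y => (indicator_mul_right (Iic R) id f).symm
  simp only [hmul]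
  rw [integral_indicator measurableSet_Iic, Measure.restrict_restrict measurableSet_Iic,
    Iic_inter_Ioi]
  push_cast
  ring

lemma lintegral_Ioi_ofReal_mul_integral_rpow_mul_exp_neg {c R α : ℝ} (hc : 0 ≤ c)
    (hR : 0 ≤ R) (hα : 0 < α) (t : ℝ) :
    ∫⁻ z in Ioi t, ENNReal.ofReal (c * ∫ r in (0 : ℝ)..R, r ^ (α + 1) * exp (-(r ^ α * z)))
      = ENNReal.ofReal (c * ∫ r in Ioc 0 R, r * exp (-(r ^ α * t))) := by
  have hrpow : Continuous fun r : ℝ => r ^ α := continuous_rpow_const hα.le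
  have hrpow_succ : Continuous fun r : ℝ => r ^ (α + 1) := continuous_rpow_const (by linarith)
  have hslice : ∀ z, ENNReal.ofReal (c * ∫ r in (0 : ℝ)..R, r ^ (α + 1) * exp (-(r ^ α * z)))
      = ENNReal.ofReal c * ∫⁻ r in Ioc 0 R, ENNReal.ofReal (r ^ (α + 1) * exp (-(r ^ α * z))) :=
    fun z => by
      rw [intervalIntegral.integral_of_le hR, ENNReal.ofReal_mul hc,
        ofReal_integral_eq_lintegral_ofReal (Continuous.integrableOn_Ioc (by fun_prop))]
      filter_upwards [ae_restrict_mem measurableSet_Ioc] with r hr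
      exact mul_nonneg (rpow_pos_of_pos hr.1 _).le (exp_pos _).le
  have hmeas : Measurable fun p : ℝ × ℝ =>
      ENNReal.ofReal (p.2 ^ (α + 1) * exp (-(p.2 ^ α * p.1))) := by fun_prop
  simp_rw [hslice]
  rw [lintegral_const_mul' _ _ ENNReal.ofReal_ne_top, lintegral_lintegral_swap hmeas.aemeasurable,
    setLIntegral_congr_fun measurableSet_Ioc fun r hr => lintegral_Ioi_rpow_mul_exp_neg hr.1 α t,
    ← ofReal_integral_eq_lintegral_ofReal (Continuous.integrableOn_Ioc (by fun_prop)),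
    ← ENNReal.ofReal_mul hc]
  filter_upwards [ae_restrict_mem measurableSet_Ioc] with r hr
  exact mul_nonneg hr.1.le (exp_pos _).le

lemma lintegral_uniform_closedBall_fin_two {R : ℝ} (hR : 0 < R) {f : ℝ → ℝ}
    (hf : Continuous f) (hf_nonneg : ∀ r, 0 ≤ f r) :
    ∫⁻ y : EuclideanSpace ℝ (Fin 2), ENNReal.ofReal (f ‖y‖)
        ∂((volume (Metric.closedBall (0 : EuclideanSpace ℝ (Fin 2)) R))⁻¹ •
        volume.restrict (Metric.closedBall 0 R))
      = ENNReal.ofReal ((2 / R ^ 2) * ∫ r in Ioc 0 R, r * f r) := by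
  rw [lintegral_smul_measure, ← ofReal_integral_eq_lintegral_ofReal
      ((by fun_prop : Continuous fun y : EuclideanSpace ℝ (Fin 2) => f ‖y‖).continuousOn
        |>.integrableOn_compact (isCompact_closedBall _ _))
      (.of_forall fun y => hf_nonneg _),
    integral_closedBall_fun_norm_fin_two, EuclideanSpace.volume_closedBall_fin_two,
    ← ENNReal.ofReal_pow hR.le, ← ENNReal.ofReal_mul (by positivity),
    ← ENNReal.ofReal_inv_of_pos (by positivity), smul_eq_mul, ← ENNReal.ofReal_mul (by positivity)]
  congr 1
  field_simp

lemma measure_le_div_eq_lintegral_exp {Ω : Type*} [MeasurableSpace Ω] {μ : Measure Ω}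
    [IsFiniteMeasure μ] {X V : Ω → ℝ} (hX : Measurable X) (hV : Measurable V)
    (hX_tail : ∀ s, 0 ≤ s → μ {ω | s ≤ X ω} = ENNReal.ofReal (exp (-s)))
    (hV_pos : ∀ᵐ ω ∂μ, 0 < V ω) (hindep : IndepFun X V μ) {t : ℝ} (ht : 0 ≤ t) :
    μ {ω | t ≤ X ω / V ω} = ∫⁻ ω, ENNReal.ofReal (exp (-(V ω * t))) ∂μ := by
  set S : Set (ℝ × ℝ) := {p | t ≤ p.2 / p.1}
  have hS : MeasurableSet S := measurableSet_le measurable_const (measurable_snd.div measurable_fst)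
  have hpair : μ.map (fun ω => (V ω, X ω)) = (μ.map V).prod (μ.map X) :=
    (indepFun_iff_map_prod_eq_prod_map_map hV.aemeasurable hX.aemeasurable).mp hindep.symm
  have hslice : ∀ v, 0 < v → μ.map X (Prod.mk v ⁻¹' S) = ENNReal.ofReal (exp (-(v * t))) := by
    intro v hv
    have hS_slice : Prod.mk v ⁻¹' S = Ici (v * t) := by
      ext x
      simp only [S, mem_preimage, mem_ofPred_eq, mem_Ici, le_div_iff₀ hv, mul_comm t]
    rw [hS_slice, Measure.map_apply hX measurableSet_Ici]
    exact hX_tail _ (mul_nonneg hv.le ht)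
  calc μ {ω | t ≤ X ω / V ω} = μ.map (fun ω => (V ω, X ω)) S :=
        (Measure.map_apply (hV.prodMk hX) hS).symm
    _ = ∫⁻ v, μ.map X (Prod.mk v ⁻¹' S) ∂μ.map V := by rw [hpair, Measure.prod_apply hS]
    _ = ∫⁻ v, ENNReal.ofReal (exp (-(v * t))) ∂μ.map V := by
        refine lintegral_congr_ae ?_
        filter_upwards [(ae_map_iff hV.aemeasurable measurableSet_Ioi).2 hV_pos] with v hv
        exact hslice v hv
    _ = ∫⁻ ω, ENNReal.ofReal (exp (-(V ω * t))) ∂μ :=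
        lintegral_map (by fun_prop) hV

lemma measure_map_div_norm_rpow_Ici {Ω : Type*} [MeasurableSpace Ω] {μ : Measure Ω}
    [IsFiniteMeasure μ] {R α : ℝ} (hR : 0 < R) (hα : 0 < α) {X : Ω → ℝ}
    {Y : Ω → EuclideanSpace ℝ (Fin 2)} (hX : Measurable X) (hY : Measurable Y)
    (hY_law : μ.map Y = (volume (Metric.closedBall (0 : EuclideanSpace ℝ (Fin 2)) R))⁻¹ •
        volume.restrict (Metric.closedBall 0 R))
    (hX_tail : ∀ s, 0 ≤ s → μ {ω | s ≤ X ω} = ENNReal.ofReal (exp (-s)))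
    (hindep : IndepFun X Y μ) {t : ℝ} (ht : 0 ≤ t) :
    μ.map (fun ω => X ω / ‖Y ω‖ ^ α) (Ici t)
      = ENNReal.ofReal ((2 / R ^ 2) * ∫ r in Ioc 0 R, r * exp (-(r ^ α * t))) := by
  have hrpow : Continuous fun r : ℝ => r ^ α := continuous_rpow_const hα.le
  have hnorm : Measurable fun y : EuclideanSpace ℝ (Fin 2) => ‖y‖ ^ α := by fun_prop
  have hY_ne : ∀ᵐ ω ∂μ, Y ω ≠ 0 := by
    refine ae_of_ae_map (p := fun y => y ≠ 0) hY.aemeasurable ?_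
    rw [hY_law]
    exact Measure.ae_smul_measure (ae_restrict_of_ae (compl_mem_ae_iff.2 (measure_singleton 0))) _
  rw [Measure.map_apply (by fun_prop) measurableSet_Ici]
  change μ {ω | t ≤ X ω / ‖Y ω‖ ^ α} = _
  rw [measure_le_div_eq_lintegral_exp (V := fun ω => ‖Y ω‖ ^ α) hX (by fun_prop) hX_tail
      (hY_ne.mono fun ω hω => rpow_pos_of_pos (norm_pos_iff.2 hω) α)
      (hindep.comp measurable_id hnorm) ht,
    ← lintegral_map (f := fun y => ENNReal.ofReal (exp (-(‖y‖ ^ α * t)))) (by fun_prop) hY, hY_law,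
    lintegral_uniform_closedBall_fin_two (f := fun r => exp (-(r ^ α * t))) hR (by fun_prop)
      fun r => (exp_pos _).le]

lemma withDensity_restrict_Ioi_zero_Ici (f : ℝ → ENNReal) (t : ℝ) :
    (volume.restrict (Ioi 0)).withDensity f (Ici t) = ∫⁻ z in Ioi (max t 0), f z := by
  have hac : (volume.restrict (Ioi 0)).withDensity f ≪ volume :=
    (withDensity_absolutelyContinuous _ _).trans
      (Measure.absolutelyContinuous_of_le Measure.restrict_le_self)
  rw [← measure_congr (hac.ae_eq Ioi_ae_eq_Ici), withDensity_apply _ measurableSet_Ioi,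
    Measure.restrict_restrict measurableSet_Ioi, Ioi_inter_Ioi]

lemma measure_Ici_eq_of_nonneg {ν : Measure ℝ} [IsProbabilityMeasure ν] {F : ℝ → ENNReal}
    (hF : ∀ t, 0 ≤ t → ν (Ici t) = F t) (hF_zero : F 0 = 1) (a : ℝ) :
    ν (Ici a) = F (max a 0) := by
  rcases le_or_gt 0 a with ha | ha
  · rw [max_eq_left ha, hF a ha]
  · rw [max_eq_right ha.le, hF_zero]
    refine le_antisymm prob_le_one ?_
    calc (1 : ENNReal) = ν (Ici 0) := by rw [hF 0 le_rfl, hF_zero]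
      _ ≤ ν (Ici a) := measure_mono (Ici_subset_Ici.2 ha.le)

/-- Let `Y` be uniform on the closed disk of radius `R_c` in ℝ², `X ~ Exp(1)` independent
of `Y`. Then the law of the composite channel gain `X/‖Y‖^α` is absolutely continuous with
respect to Lebesgue measure on `(0,∞)`, with density
`f(z) = (2/R_c²) ∫_0^{R_c} r^{α+1} e^{−r^α z} dr`. -/
theorem stmt_2 {Ω : Type*} [MeasureSpace Ω] [IsProbabilityMeasure (ℙ : Measure Ω)]
    (Rc α : ℝ) (hRc : 0 < Rc) (hα : 0 < α)
    (X : Ω → ℝ) (Y : Ω → EuclideanSpace ℝ (Fin 2))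
    (hXm : Measurable X) (hYm : Measurable Y)
    (hY : Measure.map Y ℙ =
      (volume (Metric.closedBall (0 : EuclideanSpace ℝ (Fin 2)) Rc))⁻¹ •
        volume.restrict (Metric.closedBall 0 Rc))
    (hX : ∀ t : ℝ, 0 ≤ t → ℙ {ω | t ≤ X ω} = ENNReal.ofReal (Real.exp (-t)))
    (hindep : IndepFun X Y ℙ) :
    Measure.map (fun ω => X ω / ‖Y ω‖ ^ α) ℙ =
      (volume.restrict (Set.Ioi (0 : ℝ))).withDensity
        (fun z => ENNReal.ofReal ((2 / Rc ^ 2) *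
          ∫ r in (0 : ℝ)..Rc, r ^ (α + 1) * Real.exp (-(r ^ α * z)))) := by
  set G : ℝ → ℝ := fun t => (2 / Rc ^ 2) * ∫ r in Ioc 0 Rc, r * exp (-(r ^ α * t))
  have hG_zero : G 0 = 1 := by
    simp only [G, mul_zero, neg_zero, exp_zero, mul_one]
    rw [← intervalIntegral.integral_of_le hRc.le, integral_id]
    field_simp
    ring
  have hgain : Measurable fun ω => X ω / ‖Y ω‖ ^ α :=
    hXm.div ((continuous_rpow_const hα.le).measurable.comp (measurable_norm.comp hYm))
  have : IsProbabilityMeasure (Measure.map (fun ω => X ω / ‖Y ω‖ ^ α) ℙ) :=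
    Measure.isProbabilityMeasure_map hgain.aemeasurable
  refine Measure.ext_of_Ici _ _ fun a => ?_
  rw [measure_Ici_eq_of_nonneg (F := fun t => ENNReal.ofReal (G t))
      (fun t ht => measure_map_div_norm_rpow_Ici hRc hα hXm hYm hY hX hindep ht)
      (by rw [hG_zero, ENNReal.ofReal_one]),
    withDensity_restrict_Ioi_zero_Ici,
    lintegral_Ioi_ofReal_mul_integral_rpow_mul_exp_neg (by positivity) hRc.le hα]
end

section
/- For every s > 0 and d ≥ 0, the Lebesgue integral over the complement of the disk of radius d satisfies ∫_{{x ∈ ℝ² : ‖x‖ ≥ d}} (1 − 1/(1 + s‖x‖^{−4})) dx = π√s (π/2 − arctan(d²/√s)). In particular, for d = 0 this equals π²√s/2 = 2π (s^{1/2}/4) B(1/2, 1/2). (This is the exact evaluation, for path-loss exponent α = 4, of the inter-cell interference exponent over the region excluding the disk around the CoMP user, which underlies the nearest-base-station analysis in Proposition 1 of the paper.) -/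
/-!
In polar coordinates the integral is `2π ∫_d^∞ r (1 - 1/(1 + s r⁻⁴)) dr = 2π ∫_d^∞ s r/(s + r⁴) dr`,
and `r ↦ (√s/2) arctan (r²/√s)` is an antiderivative of the last integrand, tending to `√s π/4`.
The Beta value is `Γ(1/2)² / Γ(1) = π`.
-/

open MeasureTheory Real Set

namespace MeasureTheory

open Metric

variable {E F : Type*} [NormedAddCommGroup E] [NormedSpace ℝ E] [Nontrivial E]
  [FiniteDimensional ℝ E] [MeasurableSpace E] [BorelSpace E]
  [NormedAddCommGroup F] [NormedSpace ℝ F]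

theorem setIntegral_le_norm_fun_norm_addHaar (μ : Measure E) [μ.IsAddHaarMeasure]
    (f : ℝ → F) {d : ℝ} (hd : 0 ≤ d) :
    ∫ x in {x : E | d ≤ ‖x‖}, f ‖x‖ ∂μ =
      Module.finrank ℝ E • μ.real (ball 0 1) •
        ∫ y in Ioi d, y ^ (Module.finrank ℝ E - 1) • f y := by
  have hmeas : MeasurableSet {x : E | d ≤ ‖x‖} :=
    (isClosed_le continuous_const continuous_norm).measurableSet
  have hIoi : (Ioi 0 ∩ Ici d : Set ℝ) =ᵐ[volume] Ioi d := by
    simpa only [Ioi_inter_Ioi, max_eq_right hd] using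
      (Filter.EventuallyEq.refl _ (Ioi (0 : ℝ))).inter (Ioi_ae_eq_Ici (a := d)).symm
  calc ∫ x in {x : E | d ≤ ‖x‖}, f ‖x‖ ∂μ = ∫ x, (Ici d).indicator f ‖x‖ ∂μ := by
        rw [← integral_indicator hmeas]
        rfl
    _ = _ := by
      rw [integral_fun_norm_addHaar]
      congr 2
      rw [← setIntegral_congr_set hIoi, ← setIntegral_indicator measurableSet_Ici]
      congr 1 with y
      by_cases hy : y ∈ Ici d <;> simp [hy]

end MeasureTheory

theorem realBeta_one_half_one_half : realBeta (1 / 2) (1 / 2) = π := by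
  rw [realBeta, add_halves, Real.Gamma_one, Real.Gamma_one_half_eq,
    Real.mul_self_sqrt Real.pi_pos.le, div_one]

theorem EuclideanSpace.measureReal_ball_fin_two_zero_one :
    volume.real (Metric.ball (0 : EuclideanSpace ℝ (Fin 2)) 1) = π := by
  simp [measureReal_def, Real.pi_pos.le]

theorem mul_one_sub_one_div_one_add_mul_rpow_neg_four {s y : ℝ} (hs : 0 ≤ s) (hy : 0 < y) :
    y * (1 - 1 / (1 + s * y ^ (-(4 : ℝ)))) = s * y / (s + y ^ 4) := by
  have hy4 : y ^ (-(4 : ℝ)) = (y ^ 4)⁻¹ := by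
    rw [Real.rpow_neg hy.le, show (4 : ℝ) = ((4 : ℕ) : ℝ) by norm_num, Real.rpow_natCast]
  rw [hy4]
  field_simp
  ring

theorem hasDerivAt_mul_arctan_sq_div_sqrt {s : ℝ} (hs : 0 < s) (y : ℝ) :
    HasDerivAt (fun y => √s / 2 * arctan (y ^ 2 / √s)) (s * y / (s + y ^ 4)) y := by
  have hinner : HasDerivAt (fun y : ℝ => y ^ 2 / √s) (2 * y / √s) y := by
    simpa using (hasDerivAt_pow 2 y).div_const √s
  refine (((Real.hasDerivAt_arctan _).comp y hinner).const_mul (√s / 2)).congr_deriv ?_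
  have hσ2 : √s ^ 2 = s := Real.sq_sqrt hs.le
  field_simp
  rw [hσ2]
  ring

theorem integral_Ioi_mul_div_add_pow_four {s d : ℝ} (hs : 0 < s) (hd : 0 ≤ d) :
    ∫ y in Ioi d, s * y / (s + y ^ 4) = √s / 2 * (π / 2 - arctan (d ^ 2 / √s)) := by
  have hlim : Filter.Tendsto (fun y => √s / 2 * arctan (y ^ 2 / √s)) Filter.atTop
      (nhds (√s / 2 * (π / 2))) :=
    ((tendsto_arctan_atTop.mono_right nhdsWithin_le_nhds).comp
      ((Filter.tendsto_pow_atTop two_ne_zero).atTop_div_const (Real.sqrt_pos.mpr hs))).const_mul _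
  have hnonneg : ∀ y ∈ Ioi d, 0 ≤ s * y / (s + y ^ 4) := fun y hy => by
    have : 0 < y := hd.trans_lt hy
    positivity
  rw [integral_Ioi_of_hasDerivAt_of_nonneg'
    (fun y _ => hasDerivAt_mul_arctan_sq_div_sqrt hs y) hnonneg hlim]
  ring

/-- For `s > 0` and `d ≥ 0`, with path-loss exponent `4`:
`∫_{‖x‖ ≥ d} (1 − 1/(1 + s‖x‖^{−4})) dx = π√s (π/2 − arctan(d²/√s))`; in particular, for
`d = 0` this equals `π²√s/2 = 2π (s^{1/2}/4) B(1/2, 1/2)`. -/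
theorem stmt_9 (s d : ℝ) (hs : 0 < s) (hd : 0 ≤ d) :
    (∫ x in {x : EuclideanSpace ℝ (Fin 2) | d ≤ ‖x‖},
        (1 - 1 / (1 + s * ‖x‖ ^ (-(4 : ℝ)))) =
      π * Real.sqrt s * (π / 2 - Real.arctan (d ^ 2 / Real.sqrt s))) ∧
    π ^ 2 * Real.sqrt s / 2 = 2 * π * (Real.sqrt s / 4) * realBeta (1 / 2) (1 / 2) := by
  refine ⟨?_, by rw [realBeta_one_half_one_half]; ring⟩
  have hradial : ∫ y in Ioi d, y ^ (2 - 1) • (1 - 1 / (1 + s * y ^ (-(4 : ℝ)))) =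
      ∫ y in Ioi d, s * y / (s + y ^ 4) :=
    setIntegral_congr_fun measurableSet_Ioi fun y hy => by
      simpa using mul_one_sub_one_div_one_add_mul_rpow_neg_four hs.le (hd.trans_lt hy)
  rw [setIntegral_le_norm_fun_norm_addHaar volume (fun r => 1 - 1 / (1 + s * r ^ (-(4 : ℝ)))) hd,
    finrank_euclideanSpace_fin, EuclideanSpace.measureReal_ball_fin_two_zero_one, hradial,
    integral_Ioi_mul_div_add_pow_four hs hd, nsmul_eq_mul, smul_eq_mul]
  ring
end

section
/- Let c, ε₀, ε₁, φ, ρ, d > 0 and I ≥ 0. Let X and Z be independent random variables with X exponential of rate 1 and Z exponential of rate c. Then P( X ≥ ε₀ d⁴ (I + 1/ρ)/φ and Z ≥ ε₁(φ X d^{−4} + I + 1/ρ) ) = (d⁴/(d⁴ + cε₁φ)) · exp( −( cε₁ + ε₀(d⁴ + cε₁φ)/φ ) (I + 1/ρ) ). (This is the conditional joint decoding-success probability computed in the proof of Proposition 2 of the paper: X is the CoMP user's fading power, Z models the NOMA user's composite gain, d is the distance from the CoMP user to the nearest base station, I is the inter-cell interference value, ε₀ and ε₁ are the SINR thresholds,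 φ is the power ratio, and ρ is the transmit SNR.) -/
/-!
Independence makes the joint law of `(X, Z)` the product of its marginals, and the tail of `X`
determines its law as `expMeasure 1`. Since the threshold for `Z` is affine in `X`, integrating the
tail of `Z` against the exponential density of `X` over `x ≥ ε₀d⁴(I + 1/ρ)/φ` leaves the elementary
integral of `exp (-(1 + cε₁φ/d⁴) x)`.
-/

open MeasureTheory ProbabilityTheory Real Set

lemma lintegral_Ici_ofReal_exp_neg_mul {r : ℝ} (hr : 0 < r) (a : ℝ) :
    ∫⁻ x in Ici a, ENNReal.ofReal (exp (-(r * x))) = ENNReal.ofReal (exp (-(r * a)) / r) := by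
  simp_rw [← neg_mul]
  have hint : IntegrableOn (fun x ↦ exp (-r * x)) (Ioi a) :=
    integrableOn_exp_mul_Ioi (neg_lt_zero.mpr hr) a
  rw [setLIntegral_congr Ioi_ae_eq_Ici.symm,
    ← ofReal_integral_eq_lintegral_ofReal hint (.of_forall fun _ ↦ (exp_pos _).le),
    integral_exp_mul_Ioi (neg_lt_zero.mpr hr), neg_div_neg_eq]

lemma setLIntegral_Ici_expMeasure {r a : ℝ} (ha : 0 ≤ a) {f : ℝ → ENNReal} (hf : Measurable f) :
    ∫⁻ x in Ici a, f x ∂expMeasure r =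
      ∫⁻ x in Ici a, ENNReal.ofReal (r * exp (-(r * x))) * f x := by
  rw [expMeasure, gammaMeasure, setLIntegral_withDensity_eq_setLIntegral_mul _
    (f := gammaPDF 1 r) (measurable_gammaPDFReal 1 r).ennreal_ofReal hf measurableSet_Ici]
  refine setLIntegral_congr_fun measurableSet_Ici fun x hx ↦ ?_
  rw [Pi.mul_apply, ← exponentialPDF_of_nonneg (ha.trans hx)]
  rfl

lemma expMeasure_Ici {r : ℝ} (hr : 0 < r) {t : ℝ} (ht : 0 ≤ t) :
    expMeasure r (Ici t) = ENNReal.ofReal (exp (-(r * t))) := by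
  rw [← setLIntegral_one, setLIntegral_Ici_expMeasure ht measurable_const]
  simp_rw [mul_one, ENNReal.ofReal_mul hr.le]
  rw [lintegral_const_mul _ (by fun_prop), lintegral_Ici_ofReal_exp_neg_mul hr,
    ← ENNReal.ofReal_mul hr.le, mul_div_cancel₀ _ hr.ne']

lemma eq_expMeasure_of_measure_Ici {μ : Measure ℝ} [IsProbabilityMeasure μ] {r : ℝ} (hr : 0 < r)
    (h : ∀ t, 0 ≤ t → μ (Ici t) = ENNReal.ofReal (exp (-(r * t)))) :
    μ = expMeasure r := by
  have := isProbabilityMeasure_expMeasure hr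
  have hIci_of_nonpos : ∀ ν : Measure ℝ, IsProbabilityMeasure ν → ν (Ici 0) = 1 →
      ∀ t ≤ 0, ν (Ici t) = 1 := fun ν _ h0 t ht ↦
    le_antisymm prob_le_one (h0 ▸ measure_mono (Ici_subset_Ici.mpr ht))
  refine Measure.ext_of_Ici _ _ fun t ↦ ?_
  rcases le_total 0 t with ht | ht
  · rw [h t ht, expMeasure_Ici hr ht]
  · rw [hIci_of_nonpos μ ‹_› (by simp [h]) t ht,
      hIci_of_nonpos _ this (by simp [expMeasure_Ici hr le_rfl]) t ht]

lemma ProbabilityTheory.IndepFun.measure_mem_and_le_eq_setLIntegral {Ω α : Type*}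
    [MeasurableSpace Ω] [MeasurableSpace α] {μ : Measure Ω} [IsFiniteMeasure μ]
    {X : Ω → α} {Z : Ω → ℝ} (hXZ : IndepFun X Z μ) (hX : Measurable X) (hZ : Measurable Z)
    {A : Set α} (hA : MeasurableSet A) {g : α → ℝ} (hg : Measurable g) :
    μ {ω | X ω ∈ A ∧ g (X ω) ≤ Z ω} = ∫⁻ x in A, μ {ω | g x ≤ Z ω} ∂μ.map X := by
  set S : Set (α × ℝ) := {p | p.1 ∈ A ∧ g p.1 ≤ p.2}
  have hS : MeasurableSet S :=
    (measurable_fst hA).inter (measurableSet_le (hg.comp measurable_fst) measurable_snd)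
  change μ ((fun ω ↦ (X ω, Z ω)) ⁻¹' S) = _
  rw [← Measure.map_apply (hX.prodMk hZ) hS,
    (indepFun_iff_map_prod_eq_prod_map_map hX.aemeasurable hZ.aemeasurable).mp hXZ,
    Measure.prod_apply hS, ← lintegral_indicator hA]
  refine lintegral_congr fun x ↦ ?_
  by_cases hx : x ∈ A
  · have : Prod.mk x ⁻¹' S = Ici (g x) := by ext; simp [S, hx]
    rw [this, indicator_of_mem hx, Measure.map_apply hZ measurableSet_Ici]
    rfl
  · have : Prod.mk x ⁻¹' S = ∅ := by ext; simp [S, hx]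
    rw [this, indicator_of_notMem hx, measure_empty]

lemma measure_le_and_affine_le_eq_of_exp_tails {Ω : Type*} [MeasurableSpace Ω] {μ : Measure Ω}
    [IsProbabilityMeasure μ] {r c a α β : ℝ} (hr : 0 < r) (hc : 0 ≤ c) (ha : 0 ≤ a)
    (hα : 0 ≤ α) (hβ : 0 ≤ β) {X Z : Ω → ℝ} (hX : Measurable X) (hZ : Measurable Z)
    (hXtail : ∀ t, 0 ≤ t → μ {ω | t ≤ X ω} = ENNReal.ofReal (exp (-(r * t))))
    (hZtail : ∀ t, 0 ≤ t → μ {ω | t ≤ Z ω} = ENNReal.ofReal (exp (-(c * t))))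
    (hXZ : IndepFun X Z μ) :
    μ {ω | a ≤ X ω ∧ α * X ω + β ≤ Z ω} =
      ENNReal.ofReal (r / (r + c * α) * exp (-(c * β + (r + c * α) * a))) := by
  have hK : 0 < r + c * α := by positivity
  have := Measure.isProbabilityMeasure_map (μ := μ) hX.aemeasurable
  have hlaw : μ.map X = expMeasure r := eq_expMeasure_of_measure_Ici hr fun t ht ↦ by
    rw [Measure.map_apply hX measurableSet_Ici]
    exact hXtail t ht
  calc μ {ω | a ≤ X ω ∧ α * X ω + β ≤ Z ω}
      = ∫⁻ x in Ici a, μ {ω | α * x + β ≤ Z ω} ∂expMeasure r := by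
        rw [← hlaw]
        exact hXZ.measure_mem_and_le_eq_setLIntegral hX hZ measurableSet_Ici
          (g := fun x ↦ α * x + β) (by fun_prop)
    _ = ∫⁻ x in Ici a, ENNReal.ofReal (exp (-(c * (α * x + β)))) ∂expMeasure r :=
        setLIntegral_congr_fun measurableSet_Ici fun x hx ↦
          hZtail _ (by have : 0 ≤ x := ha.trans hx; positivity)
    _ = ∫⁻ x in Ici a,
          ENNReal.ofReal (r * exp (-(c * β))) * ENNReal.ofReal (exp (-((r + c * α) * x))) := by
        rw [setLIntegral_Ici_expMeasure ha (by fun_prop)]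
        refine setLIntegral_congr_fun measurableSet_Ici fun x _ ↦ ?_
        rw [← ENNReal.ofReal_mul (by positivity), ← ENNReal.ofReal_mul (by positivity),
          mul_assoc, mul_assoc, ← exp_add, ← exp_add]
        ring_nf
    _ = ENNReal.ofReal (r / (r + c * α) * exp (-(c * β + (r + c * α) * a))) := by
        rw [lintegral_const_mul _ (by fun_prop), lintegral_Ici_ofReal_exp_neg_mul hK,
          ← ENNReal.ofReal_mul (by positivity)]
        congr 1
        rw [neg_add, exp_add]
        ring

/-- Joint decoding-success probability in Proposition 2 of the paper: if `X` is exponential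
of rate 1 and `Z` exponential of rate `c`, independent, then
`P(X ≥ ε₀d⁴(I + 1/ρ)/φ ∧ Z ≥ ε₁(φXd^{−4} + I + 1/ρ))
  = (d⁴/(d⁴ + cε₁φ)) exp(−(cε₁ + ε₀(d⁴ + cε₁φ)/φ)(I + 1/ρ))`. -/
theorem stmt_10 {Ω : Type*} [MeasureSpace Ω] [IsProbabilityMeasure (ℙ : Measure Ω)]
    (c ε₀ ε₁ φ ρ d I : ℝ) (hc : 0 < c) (hε₀ : 0 < ε₀) (hε₁ : 0 < ε₁) (hφ : 0 < φ)
    (hρ : 0 < ρ) (hd : 0 < d) (hI : 0 ≤ I)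
    (X Z : Ω → ℝ) (hXm : Measurable X) (hZm : Measurable Z)
    (hX : ∀ t : ℝ, 0 ≤ t → ℙ {ω | t ≤ X ω} = ENNReal.ofReal (Real.exp (-t)))
    (hZ : ∀ t : ℝ, 0 ≤ t → ℙ {ω | t ≤ Z ω} = ENNReal.ofReal (Real.exp (-(c * t))))
    (hindep : IndepFun X Z ℙ) :
    ℙ {ω | ε₀ * d ^ 4 * (I + 1 / ρ) / φ ≤ X ω ∧
          ε₁ * (φ * X ω / d ^ 4 + I + 1 / ρ) ≤ Z ω} =
      ENNReal.ofReal ((d ^ 4 / (d ^ 4 + c * ε₁ * φ)) *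
        Real.exp (-(c * ε₁ + ε₀ * (d ^ 4 + c * ε₁ * φ) / φ) * (I + 1 / ρ))) := by
  have haffine (x : ℝ) :
      ε₁ * (φ * x / d ^ 4 + I + 1 / ρ) = ε₁ * φ / d ^ 4 * x + ε₁ * (I + 1 / ρ) := by ring
  simp_rw [haffine]
  rw [measure_le_and_affine_le_eq_of_exp_tails one_pos hc.le (by positivity)
    (by positivity) (by positivity) hXm hZm (by simpa only [one_mul] using hX) hZ hindep]
  congr 1
  field_simp
end

section
/- Let R_c > 0, α > 0 and s ≥ 0. Let Y be a random point uniformly distributed on the closed disk of radius R_c centered at the origin in ℝ², and let X be an exponential random variable with rate 1, independent of Y. Then the Laplace transform of the composite channel gain satisfies E[exp(−s X/‖Y‖^α)] = (2/R_c²) ∫_0^{R_c} r/(1 + s r^{−α}) dr. -/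
open MeasureTheory ProbabilityTheory Real

/-! Conditioning on `Y = y`, the gain is `Exp(1)` scaled by `‖y‖^(-α)`, whose Laplace transform at
`s` is `1 / (1 + s ‖y‖^(-α))`. Independence and Fubini reduce the claim to averaging this radial
function over the disk, and in polar coordinates the uniform law on a disk of radius `R_c` has
radial density `2r / R_c²`. -/

open Set Metric

section Radial

variable {E F : Type*} [NormedAddCommGroup E] [NormedSpace ℝ E] [FiniteDimensional ℝ E]
  [Nontrivial E] [MeasurableSpace E] [BorelSpace E] (μ : Measure E) [μ.IsAddHaarMeasure]
  [NormedAddCommGroup F] [NormedSpace ℝ F]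

lemma setIntegral_closedBall_fun_norm {R : ℝ} (hR : 0 ≤ R) (g : ℝ → F) :
    ∫ x in closedBall (0 : E) R, g ‖x‖ ∂μ = Module.finrank ℝ E • μ.real (ball 0 1) •
      ∫ r in (0 : ℝ)..R, r ^ (Module.finrank ℝ E - 1) • g r := by
  have hind : (closedBall (0 : E) R).indicator (fun x => g ‖x‖)
      = fun x => (Iic R).indicator g ‖x‖ := by
    ext x
    simp [indicator, mem_closedBall]
  rw [← integral_indicator measurableSet_closedBall, hind, integral_fun_norm_addHaar]
  simp_rw [← indicator_smul_apply (Iic R) (fun r : ℝ => r ^ (Module.finrank ℝ E - 1))]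
  rw [setIntegral_indicator measurableSet_Iic, Ioi_inter_Iic, intervalIntegral.integral_of_le hR]

lemma setAverage_closedBall_fun_norm {R : ℝ} (hR : 0 < R) (g : ℝ → F) :
    ⨍ x in closedBall (0 : E) R, g ‖x‖ ∂μ = (Module.finrank ℝ E / R ^ Module.finrank ℝ E) •
      ∫ r in (0 : ℝ)..R, r ^ (Module.finrank ℝ E - 1) • g r := by
  have hball : 0 < μ.real (ball 0 1) :=
    ENNReal.toReal_pos (measure_ball_pos μ 0 one_pos).ne' measure_ball_lt_top.ne
  rw [setAverage_eq, setIntegral_closedBall_fun_norm μ hR.le,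
    Measure.addHaar_real_closedBall μ 0 hR.le,
    ← Nat.cast_smul_eq_nsmul ℝ, smul_smul, smul_smul]
  congr 1
  field_simp

end Radial

namespace ProbabilityTheory

lemma expMeasure_Ici {r : ℝ} (hr : 0 < r) {a : ℝ} (ha : 0 ≤ a) :
    expMeasure r (Ici a) = ENNReal.ofReal (exp (-(r * a))) := by
  have := isProbabilityMeasure_expMeasure hr
  have : NullSingletonClass (expMeasure r) := by
    unfold expMeasure gammaMeasure; infer_instance
  have hexp_le : exp (-(r * a)) ≤ 1 := exp_le_one_iff.2 (neg_nonpos.2 (by positivity))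
  rw [← compl_Iio, prob_compl_eq_one_sub measurableSet_Iio, measure_congr Iio_ae_eq_Iic,
    ← ofReal_cdf, cdf_expMeasure_eq hr, if_pos ha, ← ENNReal.ofReal_one,
    ← ENNReal.ofReal_sub _ (by linarith), sub_sub_cancel]

lemma eq_expMeasure_of_measure_Ici {μ : Measure ℝ} [IsProbabilityMeasure μ] {r : ℝ} (hr : 0 < r)
    (h : ∀ t, 0 ≤ t → μ (Ici t) = ENNReal.ofReal (exp (-(r * t)))) :
    μ = expMeasure r := by
  have := isProbabilityMeasure_expMeasure hr
  refine Measure.ext_of_Ici _ _ fun a => ?_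
  rcases le_total 0 a with ha | ha
  · rw [h a ha, expMeasure_Ici hr ha]
  · have eq_one : ∀ (ν : Measure ℝ) [IsProbabilityMeasure ν], ν (Ici 0) = 1 → ν (Ici a) = 1 :=
      fun ν _ h0 => le_antisymm prob_le_one (h0 ▸ measure_mono (Ici_subset_Ici.2 ha))
    rw [eq_one μ (by simpa using h 0 le_rfl),
      eq_one (expMeasure r) (by simpa using expMeasure_Ici hr le_rfl)]

lemma map_eq_expMeasure_of_measure_le {Ω : Type*} [MeasurableSpace Ω] {P : Measure Ω}
    [IsProbabilityMeasure P] {X : Ω → ℝ} (hX : Measurable X) {r : ℝ} (hr : 0 < r)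
    (h : ∀ t, 0 ≤ t → P {ω | t ≤ X ω} = ENNReal.ofReal (exp (-(r * t)))) :
    P.map X = expMeasure r := by
  have := Measure.isProbabilityMeasure_map (μ := P) hX.aemeasurable
  refine eq_expMeasure_of_measure_Ici hr fun t ht => ?_
  rw [Measure.map_apply hX measurableSet_Ici]
  exact h t ht

lemma integral_exp_neg_mul_expMeasure {r c : ℝ} (hr : 0 < r) (hc : -r < c) :
    ∫ x, exp (-(c * x)) ∂expMeasure r = r / (r + c) := by
  have hpdf : ∀ x, (exponentialPDF r x).toReal • exp (-(c * x))
      = (Ici 0).indicator (fun x => r * exp (-(r + c) * x)) x := by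
    intro x
    rcases lt_or_ge x 0 with hx | hx
    · simp [exponentialPDF_of_neg hx, hx]
    · rw [exponentialPDF_of_nonneg hx, ENNReal.toReal_ofReal (by positivity),
        indicator_of_mem (mem_Ici.2 hx), smul_eq_mul, mul_assoc, ← exp_add]
      ring_nf
  rw [expMeasure, gammaMeasure, integral_withDensity_eq_integral_toReal_smul
    (f := gammaPDF 1 r)
    (measurable_gammaPDFReal 1 r).ennreal_ofReal (ae_of_all _ fun _ => ENNReal.ofReal_lt_top)]
  change ∫ x, (exponentialPDF r x).toReal • exp (-(c * x)) = _
  rw [funext hpdf, integral_indicator measurableSet_Ici, integral_Ici_eq_integral_Ioi,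
    integral_const_mul, integral_exp_mul_Ioi (by linarith), mul_zero, exp_zero]
  field_simp

lemma IndepFun.integral_comp_eq_integral_integral {Ω α β E : Type*} [MeasurableSpace Ω]
    [MeasurableSpace α] [MeasurableSpace β] [NormedAddCommGroup E] [NormedSpace ℝ E]
    {μ : Measure Ω} [IsFiniteMeasure μ] {X : Ω → α} {Y : Ω → β} (hXY : IndepFun X Y μ)
    (hX : AEMeasurable X μ) (hY : AEMeasurable Y μ) {f : α × β → E}
    (hf : AEStronglyMeasurable f (μ.map fun ω => (X ω, Y ω)))
    (hint : Integrable (fun ω => f (X ω, Y ω)) μ) :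
    ∫ ω, f (X ω, Y ω) ∂μ = ∫ y, ∫ x, f (x, y) ∂μ.map X ∂μ.map Y := by
  have hprod := (indepFun_iff_map_prod_eq_prod_map_map hX hY).mp hXY
  have hint' : Integrable f (μ.map fun ω => (X ω, Y ω)) :=
    (integrable_map_measure hf (hX.prodMk hY)).2 hint
  rw [← integral_map (hX.prodMk hY) hf, hprod]
  exact integral_prod_symm f (hprod ▸ hint')

end ProbabilityTheory

theorem stmt_12_general {Ω : Type*} [MeasureSpace Ω] [IsProbabilityMeasure (ℙ : Measure Ω)]
    (Rc α s : ℝ) (hRc : 0 < Rc) (hs : 0 ≤ s)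
    (X : Ω → ℝ) (Y : Ω → EuclideanSpace ℝ (Fin 2))
    (hXm : Measurable X) (hYm : Measurable Y)
    (hY : Measure.map Y ℙ =
      (volume (Metric.closedBall (0 : EuclideanSpace ℝ (Fin 2)) Rc))⁻¹ •
        volume.restrict (Metric.closedBall 0 Rc))
    (hX : ∀ t : ℝ, 0 ≤ t → ℙ {ω | t ≤ X ω} = ENNReal.ofReal (Real.exp (-t)))
    (hindep : IndepFun X Y ℙ) :
    ∫ ω, Real.exp (-(s * X ω / ‖Y ω‖ ^ α)) ∂ℙ =
      (2 / Rc ^ 2) * ∫ r in (0 : ℝ)..Rc, r / (1 + s * r ^ (-α)) := by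
  let gain : ℝ × EuclideanSpace ℝ (Fin 2) → ℝ := fun p => exp (-(s * p.1 / ‖p.2‖ ^ α))
  have hgain : Measurable gain := by fun_prop
  have hlawX : Measure.map X ℙ = expMeasure 1 :=
    map_eq_expMeasure_of_measure_le hXm one_pos (by simpa using hX)
  have hX_nonneg : ∀ᵐ ω ∂ℙ, 0 ≤ X ω :=
    (mem_ae_iff_prob_eq_one (measurableSet_le measurable_const hXm)).2 (by simpa using hX 0 le_rfl)
  have hint : Integrable (fun ω => gain (X ω, Y ω)) ℙ := by
    refine Integrable.mono' (integrable_const 1)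
      (hgain.comp (hXm.prodMk hYm)).aestronglyMeasurable ?_
    filter_upwards [hX_nonneg] with ω hω
    rw [norm_of_nonneg (exp_pos _).le, exp_le_one_iff, neg_nonpos]
    exact div_nonneg (mul_nonneg hs hω) (by positivity)
  have hlaplace : ∀ y : EuclideanSpace ℝ (Fin 2), ∫ x, gain (x, y) ∂expMeasure 1
      = (1 + s * ‖y‖ ^ (-α))⁻¹ := by
    intro y
    simp only [gain, mul_div_right_comm s]
    rw [integral_exp_neg_mul_expMeasure one_pos
      (neg_one_lt_zero.trans_le (by positivity)), rpow_neg (norm_nonneg _)]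
    ring
  calc ∫ ω, exp (-(s * X ω / ‖Y ω‖ ^ α)) ∂ℙ
      = ∫ y, ∫ x, gain (x, y) ∂Measure.map X ℙ ∂Measure.map Y ℙ :=
        hindep.integral_comp_eq_integral_integral hXm.aemeasurable hYm.aemeasurable
          hgain.aestronglyMeasurable hint
    _ = ⨍ y in closedBall (0 : EuclideanSpace ℝ (Fin 2)) Rc, (1 + s * ‖y‖ ^ (-α))⁻¹ := by
        simp only [hlawX, hlaplace, hY, setAverage_eq']
    _ = (2 / Rc ^ 2) * ∫ r in (0 : ℝ)..Rc, r / (1 + s * r ^ (-α)) := by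
        rw [setAverage_closedBall_fun_norm _ hRc fun r => (1 + s * r ^ (-α))⁻¹,
          finrank_euclideanSpace_fin]
        simp [div_eq_mul_inv]

/-- Laplace transform of the composite channel gain: if `Y` is uniform on the closed disk of
radius `R_c` in ℝ² and `X ~ Exp(1)` is independent of `Y`, then for `s ≥ 0`,
`E[exp(−sX/‖Y‖^α)] = (2/R_c²) ∫_0^{R_c} r/(1 + s r^{−α}) dr`. -/
theorem stmt_12 {Ω : Type*} [MeasureSpace Ω] [IsProbabilityMeasure (ℙ : Measure Ω)]
    (Rc α s : ℝ) (hRc : 0 < Rc) (hα : 0 < α) (hs : 0 ≤ s)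
    (X : Ω → ℝ) (Y : Ω → EuclideanSpace ℝ (Fin 2))
    (hXm : Measurable X) (hYm : Measurable Y)
    (hY : Measure.map Y ℙ =
      (volume (Metric.closedBall (0 : EuclideanSpace ℝ (Fin 2)) Rc))⁻¹ •
        volume.restrict (Metric.closedBall 0 Rc))
    (hX : ∀ t : ℝ, 0 ≤ t → ℙ {ω | t ≤ X ω} = ENNReal.ofReal (Real.exp (-t)))
    (hindep : IndepFun X Y ℙ) :
    ∫ ω, Real.exp (-(s * X ω / ‖Y ω‖ ^ α)) ∂ℙ =
      (2 / Rc ^ 2) * ∫ r in (0 : ℝ)..Rc, r / (1 + s * r ^ (-α)) :=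
  stmt_12_general Rc α s hRc hs X Y hXm hYm hY hX hindep
end
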